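/- arXiv:1811.04388 — 2 statements merged into one kernel-verified Lean document; each statement's English description precedes it below -/
import Mathlib

section
/- Let (R, 𝔪, k) be a one-dimensional Cohen–Macaulay local ring admitting a canonical module, let I be a strongly Cohen–Macaulay ideal of R, and let M be a torsion-free finite R-module such that (0 :_M I) ≠ 0. Then δ_R(M/(0 :_M I)) = 0. -/
/-! Background definitions: depth, (maximal) Cohen–Macaulay modules and rings,
Koszul homology of an ideal, strongly Cohen–Macaulay ideals, Auslander's
delta invariant, canonical modules, finite injective dimension, etc. -/

open CategoryTheory Opposite Pointwise

universe u v

namespace Paper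

section Depth

variable (A : Type u) [CommRing A]

/-- The depth of a module: the supremum of lengths of regular sequences contained in the
Jacobson radical (for a local ring, the maximal ideal). -/
noncomputable def depth (M : Type v) [AddCommGroup M] [Module A M] : ℕ∞ :=
  sSup {n : ℕ∞ | ∃ rs : List A, (∀ r ∈ rs, r ∈ (⊥ : Ideal A).jacobson) ∧
    RingTheory.Sequence.IsRegular M rs ∧ (rs.length : ℕ∞) = n}

/-- The supremum of lengths of `M`-regular sequences contained in the ideal `I`
(the grade of `I` on `M`). -/
noncomputable def grade (I : Ideal A) (M : Type v) [AddCommGroup M] [Module A M] : ℕ∞ :=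
  sSup {n : ℕ∞ | ∃ rs : List A, (∀ r ∈ rs, r ∈ I) ∧
    RingTheory.Sequence.IsRegular M rs ∧ (rs.length : ℕ∞) = n}

/-- A maximal Cohen–Macaulay module: a nonzero finite module whose depth equals the
Krull dimension of the ring. -/
def IsMCM (M : Type v) [AddCommGroup M] [Module A M] : Prop :=
  Module.Finite A M ∧ Nontrivial M ∧ ((depth A M : WithBot ℕ∞) = ringKrullDim A)

/-- A Cohen–Macaulay module: a finite module which is zero or whose depth equals the Krull
dimension of its support. -/
def IsCMMod (M : Type v) [AddCommGroup M] [Module A M] : Prop :=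
  Module.Finite A M ∧ (Subsingleton M ∨
    (depth A M : WithBot ℕ∞) = ringKrullDim (A ⧸ Module.annihilator A M))

/-- A Cohen–Macaulay (local) ring. -/
def IsCMRing : Prop := (depth A A : WithBot ℕ∞) = ringKrullDim A

end Depth

section Mu

variable (A : Type u) [CommRing A]

/-- The minimal number of generators of a module. -/
noncomputable def muMod (M : Type v) [AddCommGroup M] [Module A M] : ℕ :=
  sInf {n : ℕ | ∃ f : Fin n → M, Submodule.span A (Set.range f) = ⊤}

/-- The minimal number of generators of an ideal. -/
noncomputable def muIdeal (I : Ideal A) : ℕ :=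
  sInf {n : ℕ | ∃ f : Fin n → A, Ideal.span (Set.range f) = I}

end Mu

section Delta

variable (A : Type u) [CommRing A]

/-- `M` has no nonzero free direct summand. -/
def NoFreeSummand (M : Type v) [AddCommGroup M] [Module A M] : Prop :=
  ∀ N N' : Submodule A M, IsCompl N N' → Module.Free A N → N = ⊥

/-- `Mᶜᵐ`: the sum of all submodules of `M` which are images of maximal Cohen–Macaulay
`A`-modules having no nonzero free direct summand. -/
noncomputable def cmSubmodule (M : Type v) [AddCommGroup M] [Module A M] : Submodule A M :=
  sSup {N : Submodule A M | ∃ (L : Type u) (_ : AddCommGroup L) (_ : Module A L)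
    (φ : L →ₗ[A] M), IsMCM A L ∧ NoFreeSummand A L ∧ N = LinearMap.range φ}

/-- Auslander's delta invariant: `δ_A(M) = μ_A(M / Mᶜᵐ)`. -/
noncomputable def delta (M : Type v) [AddCommGroup M] [Module A M] : ℕ :=
  muMod A (M ⧸ cmSubmodule A M)

end Delta

section Koszul

variable (A : Type u) [CommRing A] {n : ℕ}

/-- The `i`-th differential of the Koszul complex on the sequence `g` with coefficients
in `M`, realized on the free modules with bases the `(i+1)`- resp. `i`-element subsets
of `Fin n`. -/
noncomputable def koszulD (g : Fin n → A) (M : Type v) [AddCommGroup M] [Module A M] (i : ℕ) :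
    ({s : Finset (Fin n) // s.card = i + 1} → M) →ₗ[A]
      ({s : Finset (Fin n) // s.card = i} → M) where
  toFun f T := ∑ j ∈ T.1ᶜ.attach,
    ((-1 : A) ^ (T.1.filter (fun a => a < j.1)).card * g j.1) •
      f ⟨insert j.1 T.1, by
        rw [Finset.card_insert_of_notMem (Finset.mem_compl.mp j.2), T.2]⟩
  map_add' f f' := by
    funext T
    simp [smul_add, Finset.sum_add_distrib]
  map_smul' a f := by
    funext T
    simp only [Pi.smul_apply, RingHom.id_apply, Finset.smul_sum]
    exact Finset.sum_congr rfl fun j _ => smul_comm _ _ _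

/-- The differential of the Koszul complex leaving homological degree `i`. -/
noncomputable def koszulDFrom (g : Fin n → A) (M : Type v) [AddCommGroup M] [Module A M] :
    ∀ i : ℕ, ({s : Finset (Fin n) // s.card = i} → M) →ₗ[A]
      ({s : Finset (Fin n) // s.card = i - 1} → M)
  | 0 => 0
  | (i + 1) => koszulD A g M i

/-- The `i`-th Koszul homology of the sequence `g` with coefficients in `M`:
cycles modulo boundaries. -/
noncomputable def koszulHomology (g : Fin n → A) (M : Type v) [AddCommGroup M] [Module A M]
    (i : ℕ) : Type _ :=
  ↥(LinearMap.ker (koszulDFrom A g M i)) ⧸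
    Submodule.comap (LinearMap.ker (koszulDFrom A g M i)).subtype
      (LinearMap.range (koszulD A g M i))

noncomputable instance (g : Fin n → A) (M : Type v) [AddCommGroup M] [Module A M] (i : ℕ) :
    AddCommGroup (koszulHomology A g M i) := by
  unfold koszulHomology; infer_instance

noncomputable instance (g : Fin n → A) (M : Type v) [AddCommGroup M] [Module A M] (i : ℕ) :
    Module A (koszulHomology A g M i) := by
  unfold koszulHomology; infer_instance

/-- An ideal `I` is strongly Cohen–Macaulay if all the Koszul homology modules of `R` with
respect to (any) generating set of `I` are Cohen–Macaulay modules. -/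
def IsStronglyCM (I : Ideal A) : Prop :=
  ∀ (m : ℕ) (g : Fin m → A), Ideal.span (Set.range g) = I →
    ∀ i : ℕ, IsCMMod A (koszulHomology A g A i)

end Koszul

section Height

variable (A : Type u) [CommRing A]

/-- The height of an ideal: the infimum of the heights of the primes containing it. -/
noncomputable def idealHeight (I : Ideal A) : ℕ∞ :=
  ⨅ (P : {P : PrimeSpectrum A // I ≤ P.asIdeal}), Order.height P.1

end Height

section InjDim

variable (A : Type u) [CommRing A]

/-- The `i`-th Ext module `Ext_A^i(M, N)`. -/
noncomputable def extMod (M N : Type u) [AddCommGroup M] [Module A M]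
    [AddCommGroup N] [Module A N] (i : ℕ) : Type u :=
  ((Ext A (ModuleCat.{u} A) i).obj (op (ModuleCat.of A M))).obj (ModuleCat.of A N)

noncomputable instance (M N : Type u) [AddCommGroup M] [Module A M]
    [AddCommGroup N] [Module A N] (i : ℕ) : AddCommGroup (extMod A M N i) := by
  unfold extMod; infer_instance

noncomputable instance (M N : Type u) [AddCommGroup M] [Module A M]
    [AddCommGroup N] [Module A N] (i : ℕ) : Module A (extMod A M N i) := by
  unfold extMod; infer_instance

/-- A module has finite injective dimension iff the functors `Ext^i(-, Y)` vanish
uniformly in large degrees. -/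
def HasFiniteInjDim (Y : Type u) [AddCommGroup Y] [Module A Y] : Prop :=
  ∃ d : ℕ, ∀ i > d, ∀ (N : Type u) (_ : AddCommGroup N) (_ : Module A N),
    Subsingleton (extMod A N Y i)

/-- A Gorenstein (local) ring: Cohen–Macaulay and of finite injective dimension
over itself. -/
def IsGorensteinRing : Prop := IsCMRing A ∧ HasFiniteInjDim A A

end InjDim

section Canonical

variable (A : Type u) [CommRing A] [IsLocalRing A]

/-- A canonical module of a Cohen–Macaulay local ring: a maximal Cohen–Macaulay module of
finite injective dimension and of type one. -/
def IsCanonicalModule (ω : Type u) [AddCommGroup ω] [Module A ω] : Prop :=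
  IsMCM A ω ∧ HasFiniteInjDim A ω ∧
    ∃ d : ℕ, (d : WithBot ℕ∞) = ringKrullDim A ∧
      Nonempty ((extMod A (IsLocalRing.ResidueField A) ω d) ≃ₗ[A] IsLocalRing.ResidueField A)

/-- `A` admits a canonical module. -/
def HasCanonicalModule : Prop :=
  ∃ (ω : Type u) (_ : AddCommGroup ω) (_ : Module A ω), IsCanonicalModule A ω

/-- A regular local ring: the maximal ideal is generated by `dim A` elements. -/
def IsRegularLocal : Prop :=
  IsNoetherianRing A ∧
    ((muIdeal A (IsLocalRing.maximalIdeal A) : ℕ∞) : WithBot ℕ∞) = ringKrullDim A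

end Canonical

section TorsionFree

variable (A : Type u) [CommRing A]

/-- A torsion-free module: every non-zero-divisor of `A` acts injectively. -/
def TorsionFree (M : Type v) [AddCommGroup M] [Module A M] : Prop :=
  ∀ r ∈ nonZeroDivisors A, IsSMulRegular M r

end TorsionFree

end Paper

/-! `N = M/(0 :_M I)` is again torsion-free, so a nonzerodivisor of the maximal ideal (which
exists since `R` is Cohen–Macaulay of dimension one) is `N`-regular; as depth is bounded by
dimension, `N` is maximal Cohen–Macaulay. Since `(0 :_M I) ≠ 0` and `M` is torsion-free, `I`
consists of zero divisors, so some `y ≠ 0` kills `I`, hence kills `N`; a nonzero free summand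
cannot be killed by `y`. Thus `Nᶜᵐ = N`. -/

open IsLocalRing RingTheory.Sequence

theorem RingTheory.Sequence.IsRegular.length_le_ringKrullDim {A : Type*} [CommRing A]
    [IsLocalRing A] [IsNoetherianRing A] {N : Type*} [AddCommGroup N] [Module A N]
    [Module.Finite A N] {rs : List A} (h : IsRegular N rs) :
    (rs.length : WithBot ℕ∞) ≤ ringKrullDim A := by
  have := h.quot_ofList_smul_nontrivial ⊤
  obtain ⟨d, hd⟩ := WithBot.ne_bot_iff_exists.mp
    (Module.supportDim_ne_bot_of_nontrivial A (N ⧸ Ideal.ofList rs • (⊤ : Submodule A N)))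
  calc (rs.length : WithBot ℕ∞)
      ≤ d + rs.length := le_add_of_nonneg_left (by simp)
    _ = Module.supportDim A N := hd ▸ Module.supportDim_add_length_eq_supportDim_of_isRegular rs h
    _ ≤ ringKrullDim A := Module.supportDim_le_ringKrullDim A N

namespace Paper

section Depth

variable {A : Type u} [CommRing A] [IsLocalRing A] {N : Type v} [AddCommGroup N] [Module A N]

theorem depth_le_ringKrullDim [IsNoetherianRing A] [Module.Finite A N] :
    (depth A N : WithBot ℕ∞) ≤ ringKrullDim A := by
  obtain ⟨d, hd⟩ := WithBot.ne_bot_iff_exists.mp (ringKrullDim_ne_bot (R := A))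
  rw [← hd, WithBot.coe_le_coe]
  refine sSup_le ?_
  rintro n ⟨rs, -, hreg, rfl⟩
  exact WithBot.coe_le_coe.mp (hd ▸ hreg.length_le_ringKrullDim)

theorem one_le_depth_of_isSMulRegular [Module.Finite A N] [Nontrivial N] {r : A}
    (hr : r ∈ maximalIdeal A) (hreg : IsSMulRegular N r) : 1 ≤ depth A N :=
  le_sSup ⟨[r], by simpa [jacobson_eq_maximalIdeal ⊥ bot_ne_top] using hr,
    IsRegular.of_isWeaklyRegular_of_mem_maximalIdeal N (by simpa using hr)
      ((isWeaklyRegular_singleton_iff N r).mpr hreg), by simp⟩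

theorem exists_isSMulRegular_of_depth_ne_zero (h : depth A N ≠ 0) :
    ∃ r ∈ maximalIdeal A, IsSMulRegular N r := by
  contrapose! h
  refine le_antisymm (sSup_le ?_) bot_le
  rintro n ⟨_ | ⟨r, rs⟩, hmem, hreg, rfl⟩
  · simp
  · refine absurd ((isRegular_cons_iff N r rs).mp hreg).1 (h r ?_)
    simpa [jacobson_eq_maximalIdeal ⊥ bot_ne_top] using hmem r (by simp)

theorem isMCM_of_isSMulRegular [IsNoetherianRing A] (hdim : ringKrullDim A = 1)
    [Module.Finite A N] [Nontrivial N] {r : A} (hr : r ∈ maximalIdeal A)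
    (hreg : IsSMulRegular N r) : IsMCM A N := by
  refine ⟨‹_›, ‹_›, le_antisymm depth_le_ringKrullDim ?_⟩
  rw [hdim]
  exact_mod_cast one_le_depth_of_isSMulRegular hr hreg

end Depth

section TorsionFree

variable {A : Type u} [CommRing A] {M : Type v} [AddCommGroup M] [Module A M]

theorem TorsionFree.quotient_torsionBySet (hM : TorsionFree A M) (I : Ideal A) :
    TorsionFree A (M ⧸ Submodule.torsionBySet A M I) := by
  intro r hr
  rw [isSMulRegular_quotient_iff_mem_of_smul_mem]
  intro x hx
  rw [Submodule.mem_torsionBySet_iff] at hx ⊢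
  intro a
  apply hM r hr
  change r • ((a : A) • x) = r • 0
  rw [smul_zero, smul_comm, hx a]

theorem TorsionFree.disjoint_nonZeroDivisors (hM : TorsionFree A M) {I : Ideal A}
    (hI : Submodule.torsionBySet A M I ≠ ⊥) : Disjoint (I : Set A) (nonZeroDivisors A) := by
  obtain ⟨x, hx, hx0⟩ := (Submodule.ne_bot_iff _).mp hI
  refine Set.disjoint_left.mpr fun a ha hreg => hx0 (hM a hreg ?_)
  change a • x = a • 0
  rw [smul_zero]
  exact (Submodule.mem_torsionBySet_iff _ _).mp hx ⟨a, ha⟩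

theorem annihilator_le_annihilator_quotient_torsionBySet (I : Ideal A) :
    Module.annihilator A I ≤ Module.annihilator A (M ⧸ Submodule.torsionBySet A M I) := by
  intro y hy
  rw [Module.mem_annihilator] at hy ⊢
  intro q
  obtain ⟨x, rfl⟩ := Submodule.Quotient.mk_surjective _ q
  rw [← Submodule.Quotient.mk_smul, Submodule.Quotient.mk_eq_zero,
    Submodule.mem_torsionBySet_iff]
  rintro ⟨a, ha⟩
  have hya : y * a = 0 := congrArg Subtype.val (hy ⟨a, ha⟩)
  change a • y • x = 0
  rw [smul_smul, mul_comm, hya, zero_smul]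

end TorsionFree

section Delta

variable {A : Type u} [CommRing A]

theorem noFreeSummand_of_annihilator_ne_bot {N : Type v} [AddCommGroup N] [Module A N]
    (h : Module.annihilator A N ≠ ⊥) : NoFreeSummand A N := by
  intro W _ _ hfree
  by_contra hW
  have : Nontrivial W := Submodule.nontrivial_iff_ne_bot.mpr hW
  refine h (le_bot_iff.mp ?_)
  rw [← Module.annihilator_eq_bot.mpr (inferInstance : FaithfulSMul A W)]
  exact W.subtype.annihilator_le_of_injective W.injective_subtype

theorem muMod_eq_zero_of_subsingleton (N : Type v) [AddCommGroup N] [Module A N]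
    [Subsingleton N] : muMod A N = 0 :=
  Nat.sInf_eq_zero.mpr <| .inl ⟨Fin.elim0, Subsingleton.elim _ _⟩

theorem delta_eq_zero_of_subsingleton (N : Type v) [AddCommGroup N] [Module A N]
    [Subsingleton N] : delta A N = 0 :=
  muMod_eq_zero_of_subsingleton _

theorem delta_eq_zero_of_isMCM {N : Type u} [AddCommGroup N] [Module A N] (hN : IsMCM A N)
    (hfree : NoFreeSummand A N) : delta A N = 0 := by
  have : cmSubmodule A N = ⊤ :=
    top_unique <| le_sSup ⟨N, _, _, LinearMap.id, hN, hfree, LinearMap.range_id.symm⟩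
  have : Subsingleton (N ⧸ cmSubmodule A N) := Submodule.Quotient.subsingleton_iff.mpr this
  exact muMod_eq_zero_of_subsingleton _

end Delta

end Paper

open Paper in
theorem statement_2_general (R : Type u) [CommRing R] [IsLocalRing R] [IsNoetherianRing R]
    (hCM : IsCMRing R)
    (hdim : ringKrullDim R = 1)
    (I : Ideal R)
    (M : Type u) [AddCommGroup M] [Module R M] [Module.Finite R M]
    (hM : TorsionFree R M)
    (hne : Submodule.torsionBySet R M (I : Set R) ≠ ⊥) :
    delta R (M ⧸ Submodule.torsionBySet R M (I : Set R)) = 0 := by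
  rcases subsingleton_or_nontrivial (M ⧸ Submodule.torsionBySet R M (I : Set R))
  · exact delta_eq_zero_of_subsingleton _
  have hdepth : depth R R ≠ 0 := by
    intro h
    rw [IsCMRing, h, hdim] at hCM
    exact zero_ne_one (WithBot.coe_inj.mp hCM)
  obtain ⟨r, hrm, hreg⟩ := exists_isSMulRegular_of_depth_ne_zero hdepth
  have hr : r ∈ nonZeroDivisors R := (isLeftRegular_iff_isRegular.mp hreg).mem_nonZeroDivisors
  refine delta_eq_zero_of_isMCM
    (isMCM_of_isSMulRegular hdim hrm (hM.quotient_torsionBySet I r hr))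
    (noFreeSummand_of_annihilator_ne_bot fun h => ?_)
  obtain ⟨y, hy, hy0⟩ := SetLike.exists_of_lt
    (Ideal.bot_lt_annihilator_of_disjoint_nonZeroDivisors (hM.disjoint_nonZeroDivisors hne))
  exact hy0 (h ▸ annihilator_le_annihilator_quotient_torsionBySet I hy)

open Paper in
/-- Remark, part (b): over a one-dimensional Cohen–Macaulay local ring
with a canonical module, if `I` is a strongly Cohen–Macaulay ideal and `M` a torsion-free
finite module with `(0 :_M I) ≠ 0`, then `δ_R(M/(0 :_M I)) = 0`. -/
theorem statement_2 (R : Type u) [CommRing R] [IsLocalRing R] [IsNoetherianRing R]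
    (hCM : IsCMRing R) (hcan : HasCanonicalModule R)
    (hdim : ringKrullDim R = 1)
    (I : Ideal R) (hSCM : IsStronglyCM R I)
    (M : Type u) [AddCommGroup M] [Module R M] [Module.Finite R M]
    (hM : TorsionFree R M)
    (hne : Submodule.torsionBySet R M (I : Set R) ≠ ⊥) :
    delta R (M ⧸ Submodule.torsionBySet R M (I : Set R)) = 0 :=
  statement_2_general R hCM hdim I M hM hne
end

section
/- Let (R, 𝔪, k) be a Cohen–Macaulay local ring and let I be a strongly Cohen–Macaulay ideal of R with Ann_R(I) ≠ 0. If x ∈ R is a non-zero divisor on R and on all Koszul homology modules H_i(I, R), then (xR :_R I) = xR + (0 :_R I); in particular xR ∩ (0 :_R I) = x(0 :_R I) and R/(xR :_R I) ≅ (R/(0 :_R I)) ⊗_R R/xR. -/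
/-! Background definitions: depth, (maximal) Cohen–Macaulay modules and rings,
Koszul homology of an ideal, strongly Cohen–Macaulay ideals, Auslander's
delta invariant, canonical modules, finite injective dimension, etc. -/

open CategoryTheory Opposite Pointwise

universe u v

/-! Write `I = (g₁, …, g_m)`. If `r gⱼ = x sⱼ` for all `j`, then `z = (± sⱼ)` is a Koszul chain in
degree `m - 1` with `x z = d(r e)`, where `e` is the basis element in top degree `m`.
Since `d ∘ d = 0` and `x` is a non-zero-divisor, `z` is a cycle whose class is killed by `x`;
regularity of `x` on `H_{m-1}` makes `z` a boundary `d(t)`, i.e. `sⱼ = gⱼ t`. Then `r - x t`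
annihilates `I`, which gives `(xR :_R I) = xR + (0 :_R I)`; the remaining two statements are
formal consequences of `x` being a non-zero-divisor. -/

namespace Finset

variable {α M : Type*} [AddCommMonoid M]

lemma sum_attach_of_eq_singleton {s : Finset α} {a : α} (hs : s = {a}) (f : s → M) :
    ∑ x ∈ s.attach, f x = f ⟨a, by simp [hs]⟩ := by
  subst hs
  rw [← sum_coe_sort_eq_attach, Fintype.sum_subsingleton _ ⟨a, mem_singleton_self a⟩]

lemma sum_attach_of_eq_pair [DecidableEq α] {s : Finset α} {a b : α} (hab : a ≠ b)
    (hs : s = {a, b}) (f : s → M) :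
    ∑ x ∈ s.attach, f x = f ⟨a, by simp [hs]⟩ + f ⟨b, by simp [hs]⟩ := by
  subst hs
  rw [← sum_coe_sort_eq_attach, ← sum_dite_of_true (fun _ h => h) (fun x h => f ⟨x, h⟩)
    (fun _ _ => 0), sum_pair hab, dif_pos (mem_insert_self a {b}),
    dif_pos (mem_insert_of_mem (mem_singleton_self b))]

end Finset

namespace Ideal

variable {R : Type*} [CommRing R]

lemma span_singleton_sup_annihilator_le_colon (x : R) (I : Ideal R) :
    span {x} ⊔ I.annihilator ≤ Submodule.colon (span {x}) (I : Submodule R R) := by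
  refine sup_le ?_ fun r hr => Submodule.mem_colon.mpr fun p hp => ?_
  · rw [span_le, Set.singleton_subset_iff, SetLike.mem_coe, Submodule.mem_colon]
    exact fun p _ => mem_span_singleton'.mpr ⟨p, mul_comm p x⟩
  · rw [Submodule.mem_annihilator.mp hr p hp]
    exact zero_mem _

lemma span_singleton_inf_annihilator_eq_smul {x : R} (hx : x ∈ nonZeroDivisors R)
    (I : Ideal R) : span {x} ⊓ I.annihilator = x • I.annihilator := by
  refine le_antisymm (fun a ha => ?_) fun a ha => ?_
  · obtain ⟨hxa, ha⟩ := Submodule.mem_inf.mp ha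
    obtain ⟨b, rfl⟩ := mem_span_singleton'.mp hxa
    rw [Submodule.mem_smul_pointwise_iff_exists]
    refine ⟨b, Submodule.mem_annihilator.mpr fun p hp => ?_, mul_comm x b⟩
    refine (mem_nonZeroDivisors_iff_right.mp hx) _ ?_
    simpa [smul_eq_mul, mul_right_comm] using Submodule.mem_annihilator.mp ha p hp
  · obtain ⟨b, hb, rfl⟩ := (Submodule.mem_smul_pointwise_iff_exists _ _ _).mp ha
    exact Submodule.mem_inf.mpr
      ⟨mem_span_singleton'.mpr ⟨b, mul_comm b x⟩, mul_mem_left _ x hb⟩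

noncomputable def quotSupEquivTensorQuot (I J : Ideal R) :
    (R ⧸ (I ⊔ J)) ≃ₗ[R] TensorProduct R (R ⧸ I) (R ⧸ J) :=
  (Submodule.quotientQuotientEquivQuotientSup I J).symm ≪≫ₗ
    Submodule.quotEquivOfEq _ _ (by
      rw [← Submodule.range_mkQ I, ← Submodule.map_top, ← Submodule.map_smul'',
        smul_top_eq_map, Algebra.algebraMap_self, map_id, Submodule.restrictScalars_self]) ≪≫ₗ
    (TensorProduct.tensorQuotEquivQuotSMul (R ⧸ I) J).symm

end Ideal

namespace Paper

variable {R : Type u} [CommRing R] {M : Type v} [AddCommGroup M] [Module R M] {n : ℕ}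

lemma koszulD_mul_left (c : R) (g : Fin n → R) (i : ℕ)
    (F : {s : Finset (Fin n) // s.card = i + 1} → M) :
    koszulD R (fun j => c * g j) M i F = c • koszulD R g M i F := by
  funext T
  simp only [koszulD, LinearMap.coe_mk, AddHom.coe_mk, Pi.smul_apply, Finset.smul_sum, smul_smul]
  refine Finset.sum_congr rfl fun j _ => ?_
  ring_nf

lemma card_compl_singleton_fin (j : Fin (n + 1)) : ({j}ᶜ : Finset (Fin (n + 1))).card = n := by
  simp [Finset.card_compl]

lemma koszulD_apply_compl_singleton (g : Fin (n + 1) → R)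
    (F : {s : Finset (Fin (n + 1)) // s.card = n + 1} → M) (j : Fin (n + 1)) :
    koszulD R g M n F ⟨{j}ᶜ, card_compl_singleton_fin j⟩ =
      ((-1 : R) ^ (({j}ᶜ : Finset (Fin (n + 1))).filter (· < j)).card * g j) •
        F ⟨Finset.univ, by simp⟩ := by
  simp only [koszulD, LinearMap.coe_mk, AddHom.coe_mk]
  rw [Finset.sum_attach_of_eq_singleton (compl_compl _)]
  congr 2
  exact Subtype.ext (Finset.insert_compl_self j)

lemma neg_one_pow_card_filter_lt_insert_swap {U : Finset (Fin n)} {a b : Fin n} (h : a < b)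
    (ha : a ∉ U) :
    (-1 : R) ^ (U.filter (· < a)).card * (-1 : R) ^ ((insert a U).filter (· < b)).card =
      -((-1 : R) ^ (U.filter (· < b)).card *
        (-1 : R) ^ ((insert b U).filter (· < a)).card) := by
  rw [Finset.filter_insert, if_pos h, Finset.filter_insert, if_neg (not_lt.mpr h.le),
    Finset.card_insert_of_notMem (fun hmem => ha (Finset.mem_filter.mp hmem).1), pow_succ]
  ring

lemma koszulD_koszulD_top (g : Fin (n + 2) → R)
    (F : {s : Finset (Fin (n + 2)) // s.card = n + 2} → M) :
    koszulD R g M n (koszulD R g M (n + 1) F) = 0 := by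
  have hF : F = fun _ => F ⟨Finset.univ, by simp⟩ :=
    funext fun T => congrArg F (Subtype.ext (Finset.eq_univ_of_card _ (by simp [T.2])))
  funext U
  have hcard : U.1ᶜ.card = 2 := by
    rw [Finset.card_compl, U.2, Fintype.card_fin]
    omega
  obtain ⟨a, b, hab, hU⟩ := Finset.card_eq_two.mp hcard
  have ha : a ∉ U.1 := Finset.mem_compl.mp (by simp [hU])
  have hb : b ∉ U.1 := Finset.mem_compl.mp (by simp [hU])
  have hia : (insert a U.1)ᶜ = {b} := by
    rw [Finset.compl_insert, hU, Finset.erase_insert (by simp [hab])]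
  have hib : (insert b U.1)ᶜ = {a} := by
    rw [Finset.compl_insert, hU, Finset.pair_comm, Finset.erase_insert (by simp [hab.symm])]
  rw [hF]
  simp only [koszulD, LinearMap.coe_mk, AddHom.coe_mk, Pi.zero_apply]
  rw [Finset.sum_attach_of_eq_pair hab hU, Finset.sum_attach_of_eq_singleton hia,
    Finset.sum_attach_of_eq_singleton hib]
  simp only [smul_smul, ← add_smul]
  convert zero_smul R (F ⟨Finset.univ, by simp⟩)
  rcases hab.lt_or_gt with hlt | hlt
  · linear_combination (g a * g b) * neg_one_pow_card_filter_lt_insert_swap (R := R) hlt ha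
  · linear_combination (g b * g a) * neg_one_pow_card_filter_lt_insert_swap (R := R) hlt hb

lemma koszulDFrom_eq_zero_of_smul_eq_koszulD (g : Fin (n + 1) → R) {x : R}
    (hx : IsSMulRegular M x) {z : {s : Finset (Fin (n + 1)) // s.card = n} → M}
    {F : {s : Finset (Fin (n + 1)) // s.card = n + 1} → M} (h : x • z = koszulD R g M n F) :
    koszulDFrom R g M n z = 0 := by
  cases n with
  | zero => rfl
  | succ k =>
    refine (IsSMulRegular.pi fun _ => hx) ?_
    change x • koszulD R g M k z = x • 0
    rw [smul_zero, ← map_smul, h, koszulD_koszulD_top]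

lemma mem_range_koszulD_of_smul_mem {g : Fin n → R} {i : ℕ} {x : R}
    (hreg : IsSMulRegular (koszulHomology R g M i) x)
    {z : {s : Finset (Fin n) // s.card = i} → M} (hz : z ∈ LinearMap.ker (koszulDFrom R g M i))
    (hxz : x • z ∈ LinearMap.range (koszulD R g M i)) :
    z ∈ LinearMap.range (koszulD R g M i) := by
  let B := (LinearMap.range (koszulD R g M i)).comap (LinearMap.ker (koszulDFrom R g M i)).subtype
  have hreg' : IsSMulRegular (_ ⧸ B) x := hreg
  have hclass : B.mkQ ⟨z, hz⟩ = 0 := hreg' <| by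
    change x • _ = x • 0
    rw [smul_zero, ← map_smul, Submodule.mkQ_apply, Submodule.Quotient.mk_eq_zero]
    exact hxz
  rwa [Submodule.mkQ_apply, Submodule.Quotient.mk_eq_zero] at hclass

theorem exists_forall_eq_mul_of_mul_eq_mul (g : Fin (n + 1) → R) {x : R}
    (hx : x ∈ nonZeroDivisors R) (hreg : IsSMulRegular (koszulHomology R g R n) x)
    {r : R} {s : Fin (n + 1) → R} (h : ∀ j, r * g j = x * s j) :
    ∃ t, ∀ j, s j = g j * t := by
  let one : {T : Finset (Fin (n + 1)) // T.card = n + 1} → R := fun _ => 1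
  -- `z = (± sⱼ)` is `d_s one`, and `x • d_s = d_{x s} = d_{r g} = r • d_g`.
  have hz : x • koszulD R s R n one = koszulD R g R n (r • one) := by
    rw [← koszulD_mul_left, map_smul, ← koszulD_mul_left]
    simp_rw [h]
  have hcycle := koszulDFrom_eq_zero_of_smul_eq_koszulD g
    (Module.Flat.isSMulRegular_of_nonZeroDivisors hx) hz
  obtain ⟨F, hF⟩ := mem_range_koszulD_of_smul_mem hreg hcycle ⟨_, hz.symm⟩
  refine ⟨F ⟨Finset.univ, by simp⟩, fun j => ?_⟩
  have hj := congrFun hF ⟨{j}ᶜ, card_compl_singleton_fin j⟩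
  rw [koszulD_apply_compl_singleton, koszulD_apply_compl_singleton, smul_eq_mul,
    smul_eq_mul] at hj
  obtain ⟨ε, hε, hj⟩ : ∃ ε : R, ε * ε = 1 ∧ ε * g j * F ⟨Finset.univ, by simp⟩ = ε * s j :=
    ⟨_, by rw [← mul_pow]; norm_num, hj.trans (mul_one _)⟩
  linear_combination (-ε) * hj + (g j * F ⟨Finset.univ, by simp⟩ - s j) * hε

theorem colon_span_singleton_eq_sup_annihilator {m : ℕ}
    (g : Fin m → R) {x : R} (hx : x ∈ nonZeroDivisors R)
    (hreg : IsSMulRegular (koszulHomology R g R (m - 1)) x) :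
    Submodule.colon (Ideal.span {x}) (Ideal.span (Set.range g) : Submodule R R) =
      Ideal.span {x} ⊔ (Ideal.span (Set.range g)).annihilator := by
  refine le_antisymm (fun r hr => ?_) (Ideal.span_singleton_sup_annihilator_le_colon _ _)
  have hs : ∀ j, ∃ s, r * g j = x * s := fun j =>
    Ideal.mem_span_singleton'.mp (Submodule.mem_colon.mp hr _ (Ideal.subset_span ⟨j, rfl⟩))
      |>.imp fun _ h => by rw [← smul_eq_mul, ← h, mul_comm]
  choose s hs using hs
  obtain ⟨t, ht⟩ : ∃ t, ∀ j, s j = g j * t := by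
    cases m with
    | zero => exact ⟨0, fun j => j.elim0⟩
    | succ n => exact exists_forall_eq_mul_of_mul_eq_mul g hx hreg hs
  have hann : r - x * t ∈ (Ideal.span (Set.range g)).annihilator := by
    rw [← Ideal.submodule_span_eq, Submodule.mem_annihilator_span]
    rintro ⟨_, j, rfl⟩
    linear_combination hs j + x * ht j
  exact Submodule.mem_sup.mpr ⟨x * t, Ideal.mem_span_singleton'.mpr ⟨t, mul_comm t x⟩,
    r - x * t, hann, add_sub_cancel _ _⟩

end Paper

open Paper in
theorem statement_7_general (R : Type u) [CommRing R] (I : Ideal R)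
    (x : R) (hx : x ∈ nonZeroDivisors R)
    (m : ℕ) (g : Fin m → R) (hg : Ideal.span (Set.range g) = I)
    (hreg : ∀ i : ℕ, IsSMulRegular (koszulHomology R g R i) x) :
    Submodule.colon (Ideal.span {x} : Ideal R) (I : Submodule R R)
        = Ideal.span {x} ⊔ I.annihilator ∧
    (Ideal.span {x} ⊓ I.annihilator : Ideal R) = x • I.annihilator ∧
    Nonempty ((R ⧸ Submodule.colon (Ideal.span {x} : Ideal R) (I : Submodule R R)) ≃ₗ[R]
      TensorProduct R (R ⧸ I.annihilator) (R ⧸ (Ideal.span {x} : Ideal R))) := by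
  subst hg
  have hcolon := colon_span_singleton_eq_sup_annihilator g hx (hreg (m - 1))
  refine ⟨hcolon, Ideal.span_singleton_inf_annihilator_eq_smul hx _, ⟨?_⟩⟩
  exact Submodule.quotEquivOfEq _ _ (hcolon.trans (sup_comm _ _)) ≪≫ₗ
    Ideal.quotSupEquivTensorQuot _ _

open Paper in
/-- if `I` is a strongly Cohen–Macaulay ideal with `Ann_R I ≠ 0` and `x` is a
non-zero-divisor on `R` and on all Koszul homologies `Hᵢ(I, R)`, then
`(xR :_R I) = xR + (0 :_R I)`, `xR ∩ (0 :_R I) = x·(0 :_R I)`, and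
`R/(xR :_R I) ≅ (R/(0 :_R I)) ⊗_R R/xR`. -/
theorem statement_7 (R : Type u) [CommRing R] [IsLocalRing R] [IsNoetherianRing R]
    (hCM : IsCMRing R) (I : Ideal R) (hSCM : IsStronglyCM R I)
    (hann : I.annihilator ≠ ⊥)
    (x : R) (hx : x ∈ nonZeroDivisors R)
    (m : ℕ) (g : Fin m → R) (hg : Ideal.span (Set.range g) = I)
    (hreg : ∀ i : ℕ, IsSMulRegular (koszulHomology R g R i) x) :
    Submodule.colon (Ideal.span {x} : Ideal R) (I : Submodule R R)
        = Ideal.span {x} ⊔ I.annihilator ∧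
    (Ideal.span {x} ⊓ I.annihilator : Ideal R) = x • I.annihilator ∧
    Nonempty ((R ⧸ Submodule.colon (Ideal.span {x} : Ideal R) (I : Submodule R R)) ≃ₗ[R]
      TensorProduct R (R ⧸ I.annihilator) (R ⧸ (Ideal.span {x} : Ideal R))) :=
  statement_7_general R I x hx m g hg hreg
end
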